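/- arXiv:2206.00224 — 4 statements merged into one kernel-verified Lean document; each statement's English description precedes it below -/
import Mathlib

section
/- Suppose M*, Y* ∈ S^n are positive semidefinite with rank(M*) = n−k, rank(Y*) = k, and ⟨M*, Y*⟩ = 0. Let W ⊆ ℝ^n be an (n−k)-dimensional subspace. Then the restriction M*_W of M* to W is positive definite if and only if the restriction Y*_{W⊥} of Y* to W⊥ is positive definite. -/
/-!
Since `M*` and `Y*` are positive semidefinite, `⟨M*, Y*⟩ = 0` forces `Y* M* = 0`, so the range of
`M*` lies in the kernel of `Y*`; the two have dimension `n - k`, hence `ker Y* = ran M* = (ker M*)ᗮ`.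
A positive semidefinite form is positive definite on a subspace exactly when the subspace meets its
kernel trivially, and for subspaces `U, K` of complementary dimensions, `U ∩ K = 0` iff
`Uᗮ ∩ Kᗮ = 0`. Apply this to `U = W` and `K = ker M*`.
-/

open Matrix

/-- The quadratic form of a matrix, `vᵀ M v`, evaluated on a Euclidean vector. -/
noncomputable def quadForm {n : ℕ} (M : Matrix (Fin n) (Fin n) ℝ)
    (v : EuclideanSpace ℝ (Fin n)) : ℝ :=
  dotProduct (WithLp.equiv 2 (Fin n → ℝ) v) (M *ᵥ (WithLp.equiv 2 (Fin n → ℝ) v))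

open Module

namespace Matrix

open scoped ComplexOrder MatrixOrder in
theorem PosSemidef.mul_eq_zero_of_trace_mul_eq_zero {n 𝕜 : Type*} [Fintype n] [RCLike 𝕜]
    {A B : Matrix n n 𝕜} (hA : A.PosSemidef) (hB : B.PosSemidef) (h : (A * B).trace = 0) :
    A * B = 0 := by
  classical
  obtain ⟨X, rfl⟩ := CStarAlgebra.nonneg_iff_eq_star_mul_self.mp hA.nonneg
  obtain ⟨Z, rfl⟩ := CStarAlgebra.nonneg_iff_eq_star_mul_self.mp hB.nonneg
  simp only [star_eq_conjTranspose] at h ⊢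
  have hZX : Z * Xᴴ = 0 := by
    rw [← trace_conjTranspose_mul_self_eq_zero_iff, ← h]
    simp only [conjTranspose_mul, conjTranspose_conjTranspose, ← mul_assoc]
    rw [trace_mul_comm]
    simp only [mul_assoc]
  calc Xᴴ * X * (Zᴴ * Z) = Xᴴ * (Z * Xᴴ)ᴴ * Z := by
        simp only [conjTranspose_mul, conjTranspose_conjTranspose, mul_assoc]
    _ = 0 := by rw [hZX, conjTranspose_zero, mul_zero, zero_mul]

theorem finrank_range_toEuclideanLin {m n 𝕜 : Type*} [Fintype m] [Fintype n] [DecidableEq m]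
    [DecidableEq n] [RCLike 𝕜] (A : Matrix m n 𝕜) :
    finrank 𝕜 (LinearMap.range (toEuclideanLin A)) = A.rank := by
  rw [toEuclideanLin_eq_toLin_orthonormal, ← rank_eq_finrank_range_toLin]

theorem PosSemidef.quadForm_nonneg {n : ℕ} {M : Matrix (Fin n) (Fin n) ℝ} (hM : M.PosSemidef)
    (v : EuclideanSpace ℝ (Fin n)) : 0 ≤ quadForm M v := by
  simpa [quadForm] using hM.dotProduct_mulVec_nonneg v.ofLp

theorem PosSemidef.quadForm_eq_zero_iff {n : ℕ} {M : Matrix (Fin n) (Fin n) ℝ}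
    (hM : M.PosSemidef) (v : EuclideanSpace ℝ (Fin n)) :
    quadForm M v = 0 ↔ toEuclideanLin M v = 0 := by
  simpa [quadForm, toLpLin_apply] using hM.dotProduct_mulVec_zero_iff v.ofLp

theorem PosSemidef.quadForm_pos_iff_disjoint_ker {n : ℕ} {M : Matrix (Fin n) (Fin n) ℝ}
    (hM : M.PosSemidef) (U : Submodule ℝ (EuclideanSpace ℝ (Fin n))) :
    (∀ v ∈ U, v ≠ 0 → 0 < quadForm M v) ↔ Disjoint U (LinearMap.ker (toEuclideanLin M)) := by
  rw [Submodule.disjoint_def]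
  refine forall₂_congr fun v _ ↦ ?_
  simp only [(hM.quadForm_nonneg v).lt_iff_ne', ne_eq, hM.quadForm_eq_zero_iff,
    LinearMap.mem_ker, not_imp_not]

end Matrix

section InnerProductSpace

variable {𝕜 E : Type*} [RCLike 𝕜] [NormedAddCommGroup E] [InnerProductSpace 𝕜 E]
  [FiniteDimensional 𝕜 E]

theorem LinearMap.IsSymmetric.ker_eq_orthogonal_ker_of_comp_eq_zero {T S : E →ₗ[𝕜] E}
    (hT : T.IsSymmetric) (hST : S ∘ₗ T = 0)
    (hrank : finrank 𝕜 (range T) + finrank 𝕜 (range S) = finrank 𝕜 E) :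
    ker S = (ker T)ᗮ := by
  have hrange : range T = ker S := by
    refine Submodule.eq_of_le_of_finrank_eq (range_le_ker_iff.mpr hST) ?_
    have := S.finrank_range_add_finrank_ker
    omega
  rw [← hrange, ← hT.orthogonal_range, Submodule.orthogonal_orthogonal]

theorem Submodule.disjoint_orthogonal_iff_disjoint {U K : Submodule 𝕜 E}
    (h : finrank 𝕜 U + finrank 𝕜 K = finrank 𝕜 E) : Disjoint Uᗮ Kᗮ ↔ Disjoint U K := by
  rw [disjoint_iff, inf_orthogonal, orthogonal_eq_bot_iff, ← isCompl_iff_disjoint U K h.ge]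
  refine ⟨fun hsup ↦ ⟨?_, codisjoint_iff.mpr hsup⟩, fun hUK ↦ hUK.sup_eq_top⟩
  have := finrank_sup_add_finrank_inf_eq U K
  rw [hsup, finrank_top, ← h, add_eq_left, finrank_eq_zero] at this
  exact disjoint_iff.mpr this

end InnerProductSpace

/-- for PSD matrices `M*, Y*` with complementary ranks `n-k` and `k`
and `⟨M*,Y*⟩ = 0`, and an `(n-k)`-dimensional subspace `W`, the compression of `M*`
to `W` is positive definite iff the compression of `Y*` to `Wᗮ` is positive definite. -/
theorem stmt_1 {n k : ℕ} (hk : k ≤ n) (M Y : Matrix (Fin n) (Fin n) ℝ)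
    (hM : M.PosSemidef) (hY : Y.PosSemidef)
    (hrM : M.rank = n - k) (hrY : Y.rank = k)
    (hMY : Matrix.trace (M * Y) = 0)
    (W : Submodule ℝ (EuclideanSpace ℝ (Fin n)))
    (hW : Module.finrank ℝ W = n - k) :
    (∀ v ∈ W, v ≠ 0 → 0 < quadForm M v) ↔ (∀ v ∈ Wᗮ, v ≠ 0 → 0 < quadForm Y v) := by
  have hYM : Y * M = 0 := hY.mul_eq_zero_of_trace_mul_eq_zero hM (by rwa [trace_mul_comm])
  have hker : LinearMap.ker (toEuclideanLin Y) = (LinearMap.ker (toEuclideanLin M))ᗮ := by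
    refine (isSymmetric_toEuclideanLin_iff.mpr hM.1).ker_eq_orthogonal_ker_of_comp_eq_zero
      (by rw [← toLpLin_mul, hYM, map_zero]) ?_
    rw [finrank_range_toEuclideanLin, finrank_range_toEuclideanLin, hrM, hrY,
      finrank_euclideanSpace_fin]
    omega
  have hdim : finrank ℝ W + finrank ℝ (LinearMap.ker (toEuclideanLin M)) =
      finrank ℝ (EuclideanSpace ℝ (Fin n)) := by
    rw [← (toEuclideanLin M).finrank_range_add_finrank_ker, finrank_range_toEuclideanLin, hrM, hW]
  rw [hM.quadForm_pos_iff_disjoint_ker, hY.quadForm_pos_iff_disjoint_ker, hker,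
    Submodule.disjoint_orthogonal_iff_disjoint hdim]
end

section
/- In the CautiousAGD recursion, suppose for every t ≥ 0 the inequality Q(X) ≥ Q(X_{t+1}) + (1/(2L̃))‖g̃_t‖² + ⟨g̃_t, X−Ξ_t⟩ + (μ̃/2)‖X−Ξ_t‖² − 2κε_t holds for all X, with Ξ_t = (X_t+αV_t)/(1+α) and α² = μ̃/L̃. Define E_t^{(1)} by E_0^{(1)} = 0, E_{t+1}^{(1)} = (1−α)(E_t^{(1)} + ε_t). Then Q(X_t) ≤ φ_t* + 2κ E_t^{(1)} for all t ≥ 0, where φ_t* is the minimum value of the estimating sequence φ_t. -/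
open Matrix

noncomputable def frobSq {p k : ℕ} (X : Matrix (Fin p) (Fin k) ℝ) : ℝ :=
  Matrix.trace (Xᵀ * X)

noncomputable def minner {p k : ℕ} (A B : Matrix (Fin p) (Fin k) ℝ) : ℝ :=
  Matrix.trace (Aᵀ * B)

lemma frobSq_nonneg {p k : ℕ} (X : Matrix (Fin p) (Fin k) ℝ) : 0 ≤ frobSq X := by
  unfold frobSq
  rw [Matrix.trace]
  refine Finset.sum_nonneg fun j _ => ?_
  simp only [Matrix.diag_apply, Matrix.mul_apply, Matrix.transpose_apply]
  exact Finset.sum_nonneg fun i _ => mul_self_nonneg _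

lemma minner_add_smul {p k : ℕ} (A B C : Matrix (Fin p) (Fin k) ℝ) (c : ℝ) :
    minner A (B + c • C) = minner A B + c * minner A C := by
  simp [minner, Matrix.mul_add, Matrix.mul_smul, Matrix.trace_add, Matrix.trace_smul,
    smul_eq_mul]

lemma minner_zero {p k : ℕ} (A : Matrix (Fin p) (Fin k) ℝ) : minner A 0 = 0 := by
  simp [minner]

/-- first error bound for inexact prox-maps,
`Q(X_t) ≤ φ_t* + 2κ E_t^{(1)}`. -/
theorem stmt_8 {p k : ℕ} (μt Lt α κ : ℝ)
    (hμt : 0 < μt) (hLt : 0 < Lt) (hα : 0 < α) (hα1 : α < 1) (hκ : 0 < κ)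
    (hα2 : α ^ 2 = μt / Lt)
    (ε : ℕ → ℝ) (hε : ∀ t, 0 ≤ ε t)
    (Q : Matrix (Fin p) (Fin k) ℝ → ℝ)
    (Xs Ξs gs V : ℕ → Matrix (Fin p) (Fin k) ℝ) (ps E1 : ℕ → ℝ)
    -- the approximate prox-map inequality
    (hineq : ∀ t X, Q (Xs (t + 1)) + 1 / (2 * Lt) * frobSq (gs t) +
      minner (gs t) (X - Ξs t) + μt / 2 * frobSq (X - Ξs t) - 2 * κ * ε t ≤ Q X)
    (hΞ : ∀ t, Ξs t = (1 / (1 + α)) • (Xs t + α • V t))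
    -- estimating-sequence recurrences
    (hV0 : V 0 = Xs 0) (hp0 : ps 0 = Q (Xs 0))
    (hV : ∀ t, V (t + 1) = (1 - α) • V t + α • (Ξs t - (1 / μt) • gs t))
    (hps : ∀ t, ps (t + 1) = (1 - α) * ps t +
      α * (Q (Xs (t + 1)) + 1 / (2 * Lt) * frobSq (gs t)) -
      α ^ 2 / (2 * μt) * frobSq (gs t) +
      α * (1 - α) * (μt / 2 * frobSq (Ξs t - V t) + minner (gs t) (V t - Ξs t)))
    -- the error recursion E^{(1)}
    (hE0 : E1 0 = 0) (hE : ∀ t, E1 (t + 1) = (1 - α) * (E1 t + ε t)) :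
    ∀ t, Q (Xs t) ≤ ps t + 2 * κ * E1 t := by
  intro t
  induction t with
  | zero => rw [hp0, hE0]; simp
  | succ t ih =>
    have h1α : (1 : ℝ) + α ≠ 0 := by linarith
    -- key zero identity
    have hsum : Xs t + α • V t = (1 + α) • Ξs t := by
      rw [hΞ t, smul_smul, mul_one_div, div_self h1α, one_smul]
    have hkey : (Xs t - Ξs t) + α • (V t - Ξs t) = 0 := by
      have : (Xs t - Ξs t) + α • (V t - Ξs t) = (Xs t + α • V t) - (1 + α) • Ξs t := by
        module
      rw [this, hsum, sub_self]
    have hzero : minner (gs t) (Xs t - Ξs t) + α * minner (gs t) (V t - Ξs t) = 0 := by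
      rw [← minner_add_smul, hkey, minner_zero]
    have hZ : (1 - α) * (minner (gs t) (Xs t - Ξs t) + α * minner (gs t) (V t - Ξs t)) = 0 := by
      rw [hzero, mul_zero]
    -- coefficient of ‖g‖² vanishes
    have hcoef : α / (2 * Lt) - α ^ 2 / (2 * μt) + (1 - α) / (2 * Lt) = 0 := by
      rw [hα2]; field_simp; ring
    have hGd : (α / (2 * Lt) - α ^ 2 / (2 * μt) + (1 - α) / (2 * Lt)) * frobSq (gs t) = 0 := by
      rw [hcoef, zero_mul]
    have hT1 : 0 ≤ (1 - α) * (ps t + 2 * κ * E1 t - Q (Xs t)) := by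
      have := ih
      nlinarith
    have hT2 : 0 ≤ (1 - α) * (Q (Xs t) - (Q (Xs (t + 1)) + 1 / (2 * Lt) * frobSq (gs t) +
        minner (gs t) (Xs t - Ξs t) + μt / 2 * frobSq (Xs t - Ξs t) - 2 * κ * ε t)) := by
      have := hineq t (Xs t)
      nlinarith
    have hT3 : 0 ≤ (1 - α) * (μt / 2 * frobSq (Xs t - Ξs t)) := by
      exact mul_nonneg (by linarith) (mul_nonneg (by positivity) (frobSq_nonneg _))
    have hT4 : 0 ≤ α * (1 - α) * (μt / 2 * frobSq (Ξs t - V t)) := by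
      exact mul_nonneg (mul_nonneg hα.le (by linarith)) (mul_nonneg (by positivity) (frobSq_nonneg _))
    rw [hps t, hE t]
    have key : (1 - α) * ps t + α * (Q (Xs (t + 1)) + 1 / (2 * Lt) * frobSq (gs t)) -
        α ^ 2 / (2 * μt) * frobSq (gs t) +
        α * (1 - α) * (μt / 2 * frobSq (Ξs t - V t) + minner (gs t) (V t - Ξs t)) +
        2 * κ * ((1 - α) * (E1 t + ε t)) - Q (Xs (t + 1))
        = (1 - α) * (ps t + 2 * κ * E1 t - Q (Xs t)) +
          (1 - α) * (Q (Xs t) - (Q (Xs (t + 1)) + 1 / (2 * Lt) * frobSq (gs t) +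
            minner (gs t) (Xs t - Ξs t) + μt / 2 * frobSq (Xs t - Ξs t) - 2 * κ * ε t)) +
          (1 - α) * (μt / 2 * frobSq (Xs t - Ξs t)) +
          α * (1 - α) * (μt / 2 * frobSq (Ξs t - V t)) +
          (1 - α) * (minner (gs t) (Xs t - Ξs t) + α * minner (gs t) (V t - Ξs t)) +
          (α / (2 * Lt) - α ^ 2 / (2 * μt) + (1 - α) / (2 * Lt)) * frobSq (gs t) := by
      ring
    linarith [key]
end

section
/- Under the full CautiousAGD guarantee: if Q(X_0) − Opt ≤ gap₀, the accuracies ε_t are set as ε_0 = (gap₀/κ)(1−α/2) and ε_t = (gap₀/κ)(1−α/2)^t (α/2) for t ≥ 1, and Q(X_t) − Opt ≤ (1−α)^t·2gap₀ + 2κE_t with E_{t+1} = (1−α)E_t + ε_t, E_0 = 0, then for all t ≥ 1: Q(X_t) − Opt ≤ (1−α/2)^t · 4·gap₀. -/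
/-- overall CautiousAGD guarantee
`Q(X_t) - Opt ≤ (1 - α/2)^t · 4 gap₀` for `t ≥ 1`. -/
theorem stmt_11 (α κ gap Opt : ℝ)
    (hα : 0 < α) (hα1 : α < 1) (hκ : 1 ≤ κ) (hgap : 0 < gap)
    (Q ε E : ℕ → ℝ)
    (h0 : Q 0 - Opt ≤ gap)
    (hε0 : ε 0 = gap / κ * (1 - α / 2))
    (hεt : ∀ t, 1 ≤ t → ε t = gap / κ * (1 - α / 2) ^ t * (α / 2))
    (hE0 : E 0 = 0) (hE : ∀ t, E (t + 1) = (1 - α) * E t + ε t)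
    (hbound : ∀ t, Q t - Opt ≤ (1 - α) ^ t * (2 * gap) + 2 * κ * E t) :
    ∀ t, 1 ≤ t → Q t - Opt ≤ (1 - α / 2) ^ t * (4 * gap) := by
  have hκ0 : (0:ℝ) < κ := lt_of_lt_of_le one_pos hκ
  have hc : 0 < gap / κ := div_pos hgap hκ0
  have h1a : (0:ℝ) ≤ 1 - α := by linarith
  have h1a2 : (0:ℝ) ≤ 1 - α / 2 := by linarith
  have hEle : ∀ t, 1 ≤ t → E t ≤ gap / κ * (1 - α / 2) ^ t := by
    intro t ht
    induction t with
    | zero => omega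
    | succ n ih =>
      rcases Nat.eq_or_lt_of_le ht with h | h
      · have hn : n = 0 := by omega
        subst hn
        rw [hE 0, hE0, hε0]
        ring_nf
        nlinarith
      · have hn : 1 ≤ n := by omega
        have ihn := ih hn
        rw [hE n, hεt n hn]
        have h1 : (1 - α) * E n ≤ (1 - α) * (gap / κ * (1 - α / 2) ^ n) :=
          mul_le_mul_of_nonneg_left ihn h1a
        have hp : (0:ℝ) ≤ gap / κ * (1 - α / 2) ^ n :=
          mul_nonneg hc.le (pow_nonneg h1a2 n)
        calc (1 - α) * E n + gap / κ * (1 - α / 2) ^ n * (α / 2)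
            ≤ (1 - α) * (gap / κ * (1 - α / 2) ^ n) + gap / κ * (1 - α / 2) ^ n * (α / 2) := by
              linarith
          _ = gap / κ * ((1 - α / 2) ^ n * (1 - α / 2)) := by ring
          _ = gap / κ * (1 - α / 2) ^ (n + 1) := by rw [← pow_succ]
  intro t ht
  have hb := hbound t
  have hEt := hEle t ht
  have hpow : (1 - α) ^ t ≤ (1 - α / 2) ^ t :=
    pow_le_pow_left₀ h1a (by linarith) t
  have hgp : (0:ℝ) < 2 * gap := by linarith
  have h2 : 2 * κ * E t ≤ 2 * gap * (1 - α / 2) ^ t := by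
    have := mul_le_mul_of_nonneg_left hEt (by linarith : (0:ℝ) ≤ 2 * κ)
    have heq : 2 * κ * (gap / κ * (1 - α / 2) ^ t) = 2 * gap * (1 - α / 2) ^ t := by
      field_simp
    linarith [heq ▸ this]
  nlinarith [pow_nonneg h1a2 t]
end

section
/- With r^(i) > 0 as above and U^(i) = B(γ^(i), r^(i)): for all γ ∈ U^(i), (μ̂/2)I ⪯ A(γ) ⪯ 2L̂I; for γ̃ ∈ argmax_{γ∈U^(i)} q(γ,0), ‖B(γ̃)‖_F ≤ 2L̂R̂_p; and for each unit γ ∈ S^{m−1}, 2r^(i)‖Σγ_iA_i‖₂/(μ̂/2) ≤ 2 and 2r^(i)‖Σγ_iB_i‖_F/(2L̂R̂_p) ≤ 1/2. -/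
open Matrix

noncomputable def frob {p k : ℕ} (X : Matrix (Fin p) (Fin k) ℝ) : ℝ :=
  Real.sqrt (frobSq X)

noncomputable def vnorm {m : ℕ} (v : Fin m → ℝ) : ℝ :=
  Real.sqrt (∑ i, (v i) ^ 2)

noncomputable def specNorm {p q : ℕ} (A : Matrix (Fin p) (Fin q) ℝ) : ℝ :=
  sSup {r | ∃ v : Fin q → ℝ, vnorm v = 1 ∧ r = vnorm (A *ᵥ v)}

/-- Smallest eigenvalue of a (symmetric) real matrix. -/
noncomputable def lamMin {p : ℕ} (A : Matrix (Fin p) (Fin p) ℝ) : ℝ :=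
  sInf {r | ∃ v : Fin p → ℝ, v ≠ 0 ∧ A *ᵥ v = r • v}

/-- Largest eigenvalue of a (symmetric) real matrix. -/
noncomputable def lamMax {p : ℕ} (A : Matrix (Fin p) (Fin p) ℝ) : ℝ :=
  sSup {r | ∃ v : Fin p → ℝ, v ≠ 0 ∧ A *ᵥ v = r • v}

noncomputable def Aaff {p m : ℕ} (A0 : Matrix (Fin p) (Fin p) ℝ)
    (Ai : Fin m → Matrix (Fin p) (Fin p) ℝ) (γ : Fin m → ℝ) :
    Matrix (Fin p) (Fin p) ℝ :=
  A0 + ∑ i, γ i • Ai i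

noncomputable def Baff {p k m : ℕ} (B0 : Matrix (Fin p) (Fin k) ℝ)
    (Bi : Fin m → Matrix (Fin p) (Fin k) ℝ) (γ : Fin m → ℝ) :
    Matrix (Fin p) (Fin k) ℝ :=
  B0 + ∑ i, γ i • Bi i


noncomputable def caff {m : ℕ} (c0 : ℝ) (ci : Fin m → ℝ) (γ : Fin m → ℝ) : ℝ :=
  c0 + ∑ i, γ i * ci i

/-!
Write `γ = γ⁽ⁱ⁾ + δ`. Then `A(γ)` and `B(γ)` differ from their values at the centre by the pencils
`∑ δᵢ Aᵢ` and `∑ δᵢ Bᵢ`; these are homogeneous in `δ`, so the bound `ρ̂` on the unit sphere gives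
`‖∑ δᵢ Aᵢ‖₂ ≤ ρ̂ ‖δ‖` and `‖∑ δᵢ Bᵢ‖_F ≤ ρ̂ R̂_p ‖δ‖`. Weyl's perturbation bound in the Loewner order,
`(λ_min - ρ̂ ‖δ‖) I ⪯ A(γ) ⪯ (λ_max + ρ̂ ‖δ‖) I` at `λ_min, λ_max` of `A(γ⁽ⁱ⁾)`, and the triangle
inequality for `‖·‖_F` then give the first two claims on the ball `‖δ‖ ≤ r⁽ⁱ⁾`: the corresponding
terms of `r⁽ⁱ⁾` are exactly the room these perturbations need. The third claim is `ρ̂ r⁽ⁱ⁾ ≤ μ̂ / 2`.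
-/

open scoped MatrixOrder

theorem le_mul_norm_of_forall_norm_eq_one {E : Type*} [NormedAddCommGroup E] [NormedSpace ℝ E]
    {g : E → ℝ} {C : ℝ} (hg : ∀ (c : ℝ) x, g (c • x) = |c| * g x)
    (h : ∀ x, ‖x‖ = 1 → g x ≤ C) (x : E) : g x ≤ C * ‖x‖ := by
  rcases eq_or_ne x 0 with rfl | hx
  · simpa using (hg 0 0).le
  · have hx' : 0 < ‖x‖ := norm_pos_iff.2 hx
    calc g x = g (‖x‖ • (‖x‖⁻¹ • x)) := by rw [smul_inv_smul₀ hx'.ne']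
      _ = ‖x‖ * g (‖x‖⁻¹ • x) := by rw [hg, abs_norm]
      _ ≤ ‖x‖ * C := mul_le_mul_of_nonneg_left (h _ (norm_smul_inv_norm hx)) hx'.le
      _ = C * ‖x‖ := mul_comm _ _

theorem vnorm_eq_norm {m : ℕ} (v : Fin m → ℝ) :
    vnorm v = ‖(WithLp.toLp 2 v : EuclideanSpace ℝ (Fin m))‖ := by
  simp [vnorm, EuclideanSpace.norm_eq]

theorem vnorm_smul {m : ℕ} (c : ℝ) (v : Fin m → ℝ) : vnorm (c • v) = |c| * vnorm v := by
  simp only [vnorm_eq_norm, WithLp.toLp_smul, norm_smul, Real.norm_eq_abs]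

theorem le_mul_vnorm_of_forall_vnorm_eq_one {m : ℕ} {g : (Fin m → ℝ) → ℝ} {C : ℝ}
    (hg : ∀ (c : ℝ) v, g (c • v) = |c| * g v) (h : ∀ v, vnorm v = 1 → g v ≤ C)
    (v : Fin m → ℝ) : g v ≤ C * vnorm v := by
  have := le_mul_norm_of_forall_norm_eq_one (g := fun y : EuclideanSpace ℝ (Fin m) ↦ g y.ofLp)
    (fun c y ↦ hg c y.ofLp) (fun y hy ↦ h _ (by rwa [vnorm_eq_norm])) (WithLp.toLp 2 v)
  rwa [← vnorm_eq_norm] at this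

theorem abs_dotProduct_le_vnorm_mul {m : ℕ} (x y : Fin m → ℝ) :
    |x ⬝ᵥ y| ≤ vnorm x * vnorm y := by
  have := abs_real_inner_le_norm (WithLp.toLp 2 y : EuclideanSpace ℝ (Fin m)) (WithLp.toLp 2 x)
  rwa [EuclideanSpace.inner_eq_star_dotProduct, star_trivial, ← vnorm_eq_norm,
    ← vnorm_eq_norm, mul_comm] at this

section Frobenius

attribute [local instance] Matrix.frobeniusNormedAddCommGroup Matrix.frobeniusNormSMulClass

theorem frob_eq_norm {p k : ℕ} (X : Matrix (Fin p) (Fin k) ℝ) : frob X = ‖X‖ := by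
  rw [frob, frobSq, Matrix.frobenius_norm_def, Real.sqrt_eq_rpow, Matrix.trace, Finset.sum_comm]
  simp [Matrix.mul_apply, sq]

theorem frob_add_le {p k : ℕ} (X Y : Matrix (Fin p) (Fin k) ℝ) :
    frob (X + Y) ≤ frob X + frob Y := by
  simpa only [frob_eq_norm] using norm_add_le X Y

theorem frob_smul {p k : ℕ} (c : ℝ) (X : Matrix (Fin p) (Fin k) ℝ) :
    frob (c • X) = |c| * frob X := by
  simp only [frob_eq_norm, norm_smul, Real.norm_eq_abs]

end Frobenius

open scoped Matrix.Norms.L2Operator in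
theorem bddAbove_specNorm_set {p q : ℕ} (M : Matrix (Fin p) (Fin q) ℝ) :
    BddAbove {r | ∃ v : Fin q → ℝ, vnorm v = 1 ∧ r = vnorm (M *ᵥ v)} := by
  refine ⟨‖M‖, ?_⟩
  rintro _ ⟨v, hv, rfl⟩
  have := M.l2_opNorm_mulVec (WithLp.toLp 2 v)
  rw [vnorm_eq_norm] at hv ⊢
  simpa [hv] using this

theorem vnorm_mulVec_le_specNorm_mul {p q : ℕ} (M : Matrix (Fin p) (Fin q) ℝ) (x : Fin q → ℝ) :
    vnorm (M *ᵥ x) ≤ specNorm M * vnorm x :=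
  le_mul_vnorm_of_forall_vnorm_eq_one (g := fun x ↦ vnorm (M *ᵥ x))
    (fun c v ↦ by simp only [Matrix.mulVec_smul, vnorm_smul])
    (fun v hv ↦ le_csSup (bddAbove_specNorm_set M) ⟨v, hv, rfl⟩) x

theorem abs_dotProduct_mulVec_le {p : ℕ} (M : Matrix (Fin p) (Fin p) ℝ) (x : Fin p → ℝ) :
    |x ⬝ᵥ M *ᵥ x| ≤ specNorm M * vnorm x ^ 2 :=
  calc |x ⬝ᵥ M *ᵥ x| ≤ vnorm x * vnorm (M *ᵥ x) := abs_dotProduct_le_vnorm_mul x (M *ᵥ x)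
    _ ≤ vnorm x * (specNorm M * vnorm x) :=
        mul_le_mul_of_nonneg_left (vnorm_mulVec_le_specNorm_mul M x) (Real.sqrt_nonneg _)
    _ = specNorm M * vnorm x ^ 2 := by ring

theorem eigenvalue_set_eq_spectrum {p : ℕ} (N : Matrix (Fin p) (Fin p) ℝ) :
    {r | ∃ v : Fin p → ℝ, v ≠ 0 ∧ N *ᵥ v = r • v} = spectrum ℝ N := by
  ext r
  rw [← Matrix.spectrum_toLin', ← Module.End.hasEigenvalue_iff_mem_spectrum]
  simp [Module.End.hasEigenvalue_iff, Submodule.ne_bot_iff, and_comm]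

theorem lamMin_smul_one_le {p : ℕ} {N : Matrix (Fin p) (Fin p) ℝ} (hN : N.IsHermitian) :
    lamMin N • (1 : Matrix (Fin p) (Fin p) ℝ) ≤ N := by
  rw [← Algebra.algebraMap_eq_smul_one, algebraMap_le_iff_le_spectrum hN.isSelfAdjoint]
  intro x hx
  rw [lamMin, eigenvalue_set_eq_spectrum]
  exact csInf_le N.finite_real_spectrum.bddBelow hx

theorem le_lamMax_smul_one {p : ℕ} {N : Matrix (Fin p) (Fin p) ℝ} (hN : N.IsHermitian) :
    N ≤ lamMax N • (1 : Matrix (Fin p) (Fin p) ℝ) := by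
  rw [← Algebra.algebraMap_eq_smul_one, le_algebraMap_iff_spectrum_le hN.isSelfAdjoint]
  intro x hx
  rw [lamMax, eigenvalue_set_eq_spectrum]
  exact le_csSup N.finite_real_spectrum.bddAbove hx

theorem smul_one_le_smul_one {n : Type*} [Fintype n] [DecidableEq n] {a b : ℝ} (h : a ≤ b) :
    a • (1 : Matrix n n ℝ) ≤ b • 1 := by
  rw [Matrix.le_iff, ← sub_smul]
  exact Matrix.PosSemidef.one.smul (sub_nonneg.2 h)

theorem le_of_forall_dotProduct_mulVec_le {n : Type*} [Fintype n] {A B : Matrix n n ℝ}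
    (hA : A.IsHermitian) (hB : B.IsHermitian) (h : ∀ x, x ⬝ᵥ A *ᵥ x ≤ x ⬝ᵥ B *ᵥ x) : A ≤ B := by
  refine Matrix.le_iff.2 (.of_dotProduct_mulVec_nonneg (hB.sub hA) fun x ↦ ?_)
  rw [star_trivial, Matrix.sub_mulVec, dotProduct_sub, sub_nonneg]
  exact h x

theorem dotProduct_smul_one_mulVec {p : ℕ} (c : ℝ) (x : Fin p → ℝ) :
    x ⬝ᵥ (c • (1 : Matrix (Fin p) (Fin p) ℝ)) *ᵥ x = c * vnorm x ^ 2 := by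
  rw [Matrix.smul_mulVec, Matrix.one_mulVec, dotProduct_smul, smul_eq_mul, vnorm,
    Real.sq_sqrt (by positivity)]
  simp only [dotProduct, sq]

section AffinePencil

variable {p k m : ℕ}

theorem abs_dotProduct_sum_smul_mulVec_le {Ai : Fin m → Matrix (Fin p) (Fin p) ℝ} {ρ : ℝ}
    (hρ : ∀ γ : Fin m → ℝ, vnorm γ = 1 → specNorm (∑ i, γ i • Ai i) ≤ ρ)
    (δ : Fin m → ℝ) (x : Fin p → ℝ) :
    |x ⬝ᵥ (∑ i, δ i • Ai i) *ᵥ x| ≤ ρ * vnorm x ^ 2 * vnorm δ :=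
  le_mul_vnorm_of_forall_vnorm_eq_one (g := fun δ ↦ |x ⬝ᵥ (∑ i, δ i • Ai i) *ᵥ x|)
    (fun c δ ↦ by
      simp only [Pi.smul_apply, smul_eq_mul, mul_smul, ← Finset.smul_sum, Matrix.smul_mulVec,
        dotProduct_smul, abs_mul])
    (fun γ hγ ↦ (abs_dotProduct_mulVec_le _ x).trans
      (mul_le_mul_of_nonneg_right (hρ γ hγ) (sq_nonneg _))) δ

theorem frob_sum_smul_le {Bi : Fin m → Matrix (Fin p) (Fin k) ℝ} {C : ℝ}
    (hB : ∀ γ : Fin m → ℝ, vnorm γ = 1 → frob (∑ i, γ i • Bi i) ≤ C) (δ : Fin m → ℝ) :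
    frob (∑ i, δ i • Bi i) ≤ C * vnorm δ :=
  le_mul_vnorm_of_forall_vnorm_eq_one (g := fun δ ↦ frob (∑ i, δ i • Bi i))
    (fun c δ ↦ by simp only [Pi.smul_apply, smul_eq_mul, mul_smul, ← Finset.smul_sum, frob_smul])
    hB δ

theorem isHermitian_sum_smul {Ai : Fin m → Matrix (Fin p) (Fin p) ℝ}
    (hAi : ∀ i, (Ai i)ᵀ = Ai i) (δ : Fin m → ℝ) : (∑ i, δ i • Ai i).IsHermitian :=
  Matrix.isHermitian_iff_isSymm.2 (by simp [Matrix.IsSymm, Matrix.transpose_sum, hAi])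

theorem sum_smul_mem_Icc_smul_one {Ai : Fin m → Matrix (Fin p) (Fin p) ℝ} {ρ : ℝ}
    (hAi : ∀ i, (Ai i)ᵀ = Ai i)
    (hρ : ∀ γ : Fin m → ℝ, vnorm γ = 1 → specNorm (∑ i, γ i • Ai i) ≤ ρ) (δ : Fin m → ℝ) :
    ∑ i, δ i • Ai i ∈ Set.Icc (-(ρ * vnorm δ) • (1 : Matrix (Fin p) (Fin p) ℝ))
      ((ρ * vnorm δ) • 1) := by
  have hE := isHermitian_sum_smul hAi δ
  have hquad x := abs_le.1 (abs_dotProduct_sum_smul_mulVec_le hρ δ x)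
  constructor
  · refine le_of_forall_dotProduct_mulVec_le (Matrix.isHermitian_one.smul (.all _)) hE fun x ↦ ?_
    rw [dotProduct_smul_one_mulVec]
    linarith [hquad x]
  · refine le_of_forall_dotProduct_mulVec_le hE (Matrix.isHermitian_one.smul (.all _)) fun x ↦ ?_
    rw [dotProduct_smul_one_mulVec]
    linarith [hquad x]

theorem Aaff_eq_add (A0 : Matrix (Fin p) (Fin p) ℝ) (Ai : Fin m → Matrix (Fin p) (Fin p) ℝ)
    (γ γ' : Fin m → ℝ) : Aaff A0 Ai γ = Aaff A0 Ai γ' + ∑ i, (γ - γ') i • Ai i := by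
  simp only [Aaff, Pi.sub_apply, sub_smul, Finset.sum_sub_distrib]
  abel

theorem Baff_eq_add (B0 : Matrix (Fin p) (Fin k) ℝ) (Bi : Fin m → Matrix (Fin p) (Fin k) ℝ)
    (γ γ' : Fin m → ℝ) : Baff B0 Bi γ = Baff B0 Bi γ' + ∑ i, (γ - γ') i • Bi i := by
  simp only [Baff, Pi.sub_apply, sub_smul, Finset.sum_sub_distrib]
  abel

theorem isHermitian_Aaff {A0 : Matrix (Fin p) (Fin p) ℝ} {Ai : Fin m → Matrix (Fin p) (Fin p) ℝ}
    (hA0 : A0ᵀ = A0) (hAi : ∀ i, (Ai i)ᵀ = Ai i) (γ : Fin m → ℝ) : (Aaff A0 Ai γ).IsHermitian :=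
  (Matrix.isHermitian_iff_isSymm.2 hA0).add (isHermitian_sum_smul hAi γ)

theorem Aaff_mem_Icc_smul_one {A0 : Matrix (Fin p) (Fin p) ℝ}
    {Ai : Fin m → Matrix (Fin p) (Fin p) ℝ} {ρ : ℝ} (hA0 : A0ᵀ = A0) (hAi : ∀ i, (Ai i)ᵀ = Ai i)
    (hρ : ∀ γ : Fin m → ℝ, vnorm γ = 1 → specNorm (∑ i, γ i • Ai i) ≤ ρ) (γ γ' : Fin m → ℝ) :
    Aaff A0 Ai γ ∈ Set.Icc ((lamMin (Aaff A0 Ai γ') - ρ * vnorm (γ - γ')) • 1)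
      ((lamMax (Aaff A0 Ai γ') + ρ * vnorm (γ - γ')) • 1) := by
  have hN := isHermitian_Aaff hA0 hAi γ'
  obtain ⟨hlo, hhi⟩ := sum_smul_mem_Icc_smul_one hAi hρ (γ - γ')
  rw [Aaff_eq_add A0 Ai γ γ', sub_eq_add_neg, add_smul, add_smul]
  exact ⟨add_le_add (lamMin_smul_one_le hN) hlo, add_le_add (le_lamMax_smul_one hN) hhi⟩

theorem frob_Baff_le {B0 : Matrix (Fin p) (Fin k) ℝ} {Bi : Fin m → Matrix (Fin p) (Fin k) ℝ}
    {C : ℝ} (hB : ∀ γ : Fin m → ℝ, vnorm γ = 1 → frob (∑ i, γ i • Bi i) ≤ C)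
    (γ γ' : Fin m → ℝ) : frob (Baff B0 Bi γ) ≤ frob (Baff B0 Bi γ') + C * vnorm (γ - γ') := by
  rw [Baff_eq_add B0 Bi γ γ']
  exact (frob_add_le _ _).trans (add_le_add_right (frob_sum_smul_le hB _) _)

end AffinePencil

theorem stmt_16_general {p k m : ℕ}
    (A0 : Matrix (Fin p) (Fin p) ℝ) (Ai : Fin m → Matrix (Fin p) (Fin p) ℝ)
    (B0 : Matrix (Fin p) (Fin k) ℝ) (Bi : Fin m → Matrix (Fin p) (Fin k) ℝ)
    (c0 : ℝ) (ci : Fin m → ℝ)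
    (hA0 : A0ᵀ = A0) (hAi : ∀ i, (Ai i)ᵀ = Ai i)
    (μh Lh Rd Rp ρ : ℝ)
    (hμ : 0 < μh) (hμL : μh ≤ Lh) (hRp : 0 < Rp) (hρ : 0 < ρ)
    (γi : Fin m → ℝ)
    (hρ2 : ∀ γ : Fin m → ℝ, vnorm γ = 1 →
      specNorm (∑ i, γ i • Ai i) ≤ ρ ∧ frob (∑ i, γ i • Bi i) / Rp ≤ ρ)
    (r : ℝ)
    (hr : r = min (min (min (min (μh / (2 * ρ)) (2 * Rd - vnorm γi))
        ((lamMin (Aaff A0 Ai γi) - μh / 2) / ρ))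
        ((2 * Lh - lamMax (Aaff A0 Ai γi)) / ρ))
        ((2 * Lh * Rp - frob (Baff B0 Bi γi)) / (ρ * Rp)))
    (hrpos : 0 < r) :
    -- (1) (μ̂/2) I ⪯ A(γ) ⪯ 2 L̂ I on the ball
    (∀ γ : Fin m → ℝ, vnorm (γ - γi) ≤ r →
      (Aaff A0 Ai γ - (μh / 2) • (1 : Matrix (Fin p) (Fin p) ℝ)).PosSemidef ∧
      ((2 * Lh) • (1 : Matrix (Fin p) (Fin p) ℝ) - Aaff A0 Ai γ).PosSemidef) ∧
    -- (2) any argmax γ̃ of q(·, 0) over the ball satisfies ‖B(γ̃)‖_F ≤ 2 L̂ R̂_p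
    (∀ γt : Fin m → ℝ, vnorm (γt - γi) ≤ r →
      caff c0 ci γt = sSup {x | ∃ γ : Fin m → ℝ, vnorm (γ - γi) ≤ r ∧ x = caff c0 ci γ} →
      frob (Baff B0 Bi γt) ≤ 2 * Lh * Rp) ∧
    -- (3) regularity estimates for D = 2 r, H = 2
    (∀ γ : Fin m → ℝ, vnorm γ = 1 →
      2 * r * specNorm (∑ i, γ i • Ai i) / (μh / 2) ≤ 2 ∧
      2 * r * frob (∑ i, γ i • Bi i) / (2 * Lh * Rp) ≤ 1 / 2) := by
  have hA : ∀ γ : Fin m → ℝ, vnorm γ = 1 → specNorm (∑ i, γ i • Ai i) ≤ ρ :=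
    fun γ hγ ↦ (hρ2 γ hγ).1
  have hB : ∀ γ : Fin m → ℝ, vnorm γ = 1 → frob (∑ i, γ i • Bi i) ≤ ρ * Rp :=
    fun γ hγ ↦ (div_le_iff₀ hRp).1 (hρ2 γ hγ).2
  have hr_le := hr.le
  simp only [le_min_iff] at hr_le
  obtain ⟨⟨⟨⟨hr1, -⟩, hr3⟩, hr4⟩, hr5⟩ := hr_le
  rw [le_div_iff₀ (by positivity)] at hr1 hr3 hr4 hr5
  refine ⟨fun γ hγ ↦ ?_, fun γt hγt _ ↦ ?_, fun γ hγ ↦ ?_⟩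
  · have hδ := mul_le_mul_of_nonneg_left hγ hρ.le
    obtain ⟨hlo, hhi⟩ := Aaff_mem_Icc_smul_one hA0 hAi hA γ γi
    exact ⟨Matrix.le_iff.1 ((smul_one_le_smul_one (by linarith)).trans hlo),
      Matrix.le_iff.1 (hhi.trans (smul_one_le_smul_one (by linarith)))⟩
  · have hδ := mul_le_mul_of_nonneg_left hγt (mul_pos hρ hRp).le
    linarith [frob_Baff_le (B0 := B0) hB γt γi]
  · have hLh : 0 < Lh := hμ.trans_le hμL
    have hs := mul_le_mul_of_nonneg_left (hA γ hγ) hrpos.le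
    have hf := mul_le_mul_of_nonneg_left (hB γ hγ) hrpos.le
    constructor
    · rw [div_le_iff₀ (by positivity)]
      linarith
    · rw [div_le_iff₀ (by positivity)]
      nlinarith

/-- the ball `U⁽ⁱ⁾ = B(γ⁽ⁱ⁾, r⁽ⁱ⁾)` satisfies the regularity
estimates with `μ = μ̂/2`, `L = 2L̂`, `R = R̂_p`, `D = 2r⁽ⁱ⁾`, `H = 2`. -/
theorem stmt_16 {p k m : ℕ}
    (A0 : Matrix (Fin p) (Fin p) ℝ) (Ai : Fin m → Matrix (Fin p) (Fin p) ℝ)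
    (B0 : Matrix (Fin p) (Fin k) ℝ) (Bi : Fin m → Matrix (Fin p) (Fin k) ℝ)
    (c0 : ℝ) (ci : Fin m → ℝ)
    (hA0 : A0ᵀ = A0) (hAi : ∀ i, (Ai i)ᵀ = Ai i)
    (μh Lh Rd Rp ρ : ℝ)
    (hμ : 0 < μh) (hμL : μh ≤ Lh) (hRp : 0 < Rp) (hRd : 1 ≤ Rd) (hρ : 0 < ρ)
    (γi : Fin m → ℝ)
    (hρ2 : ∀ γ : Fin m → ℝ, vnorm γ = 1 →
      specNorm (∑ i, γ i • Ai i) ≤ ρ ∧ frob (∑ i, γ i • Bi i) / Rp ≤ ρ)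
    (r : ℝ)
    (hr : r = min (min (min (min (μh / (2 * ρ)) (2 * Rd - vnorm γi))
        ((lamMin (Aaff A0 Ai γi) - μh / 2) / ρ))
        ((2 * Lh - lamMax (Aaff A0 Ai γi)) / ρ))
        ((2 * Lh * Rp - frob (Baff B0 Bi γi)) / (ρ * Rp)))
    (hrpos : 0 < r) :
    -- (1) (μ̂/2) I ⪯ A(γ) ⪯ 2 L̂ I on the ball
    (∀ γ : Fin m → ℝ, vnorm (γ - γi) ≤ r →
      (Aaff A0 Ai γ - (μh / 2) • (1 : Matrix (Fin p) (Fin p) ℝ)).PosSemidef ∧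
      ((2 * Lh) • (1 : Matrix (Fin p) (Fin p) ℝ) - Aaff A0 Ai γ).PosSemidef) ∧
    -- (2) any argmax γ̃ of q(·, 0) over the ball satisfies ‖B(γ̃)‖_F ≤ 2 L̂ R̂_p
    (∀ γt : Fin m → ℝ, vnorm (γt - γi) ≤ r →
      caff c0 ci γt = sSup {x | ∃ γ : Fin m → ℝ, vnorm (γ - γi) ≤ r ∧ x = caff c0 ci γ} →
      frob (Baff B0 Bi γt) ≤ 2 * Lh * Rp) ∧
    -- (3) regularity estimates for D = 2 r, H = 2
    (∀ γ : Fin m → ℝ, vnorm γ = 1 →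
      2 * r * specNorm (∑ i, γ i • Ai i) / (μh / 2) ≤ 2 ∧
      2 * r * frob (∑ i, γ i • Bi i) / (2 * Lh * Rp) ≤ 1 / 2) :=
  stmt_16_general A0 Ai B0 Bi c0 ci hA0 hAi μh Lh Rd Rp ρ hμ hμL hRp hρ γi hρ2 r hr hrpos
end
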